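/- arXiv:0707.2985 — 2 statements merged into one kernel-verified Lean document; each statement's English description precedes it below -/
import Mathlib

section
/- Let 0 ≠ η ∈ c₀*. Then there exist α, β > 0 with α·log n ≤ (η_{a²})_n/(η_a)_n ≤ β·log n for all n ≥ 2 if and only if sup_m (m²(η_a)_{m²})/(m(η_a)_m) < ∞ (the exponential Δ₂-condition), i.e., there exists c > 0 with ∑_{i=1}^{m²} η_i ≤ c·∑_{i=1}^m η_i for all m. -/
/-!
Write `S n = ∑_{j ≤ n} η j` and `T n = ∑_{j ≤ n} S j / j`, so that
`(η_{a²})_n / (η_a)_n = T n / S n`. Comparing `∑ 1 / j` with `log`,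
`T b - T a ≤ S b · log (b / a)` and `T b ≥ S (a + 1) · log ((b + 1) / (a + 1))`;
in particular `T n ≤ (1 + log n) · S n`.

Under the Δ₂-condition, `a = ⌊√n⌋` gives `T n ≥ S (a + 1) · log n / 4 ≥ S n · log n / (4 c)`.
Conversely, `α · log N · S N ≤ T N` and the increment bound give `S N ≤ C · S n` whenever
`n ≤ N ≤ n ^ (1 + α / 2)`. Iterating along `m, m a, …, m a ^ K` with `a ≈ m ^ (1 / K)`
reaches `m²` in a bounded number of steps, and the finitely many small `m` are absorbed
into the constant.
-/
open Finset Filter Real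

/-- First-order arithmetic mean: (ξ_a)_n = (1/n) ∑_{j=1}^n ξ_j. -/
noncomputable def am (ξ : ℕ → ℝ) (n : ℕ) : ℝ := (∑ j ∈ Finset.Icc 1 n, ξ j) / n

/-- Second-order arithmetic mean. -/
noncomputable def am2 (ξ : ℕ → ℝ) : ℕ → ℝ := am (am ξ)

/-- Harmonic numbers H_n = ∑_{j=1}^n 1/j. -/
noncomputable def harm (n : ℕ) : ℝ := ∑ j ∈ Finset.Icc 1 n, (1 : ℝ) / j

lemma sum_inv_succ_le_log_div {a b : ℕ} (ha : 1 ≤ a) (hab : a ≤ b) :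
    ∑ i ∈ Ico a b, ((i + 1 : ℕ) : ℝ)⁻¹ ≤ log (b / a) := by
  have ha' : (0 : ℝ) < a := by exact_mod_cast ha
  rw [← integral_inv_of_pos ha' (ha'.trans_le (by exact_mod_cast hab))]
  exact AntitoneOn.sum_le_integral_Ico hab (inv_antitoneOn_Icc_right ha')

lemma log_div_le_sum_inv_succ {a b : ℕ} (hab : a ≤ b) :
    log ((b + 1) / (a + 1)) ≤ ∑ i ∈ Ico a b, ((i + 1 : ℕ) : ℝ)⁻¹ := by
  have ha' : (0 : ℝ) < (a + 1 : ℕ) := by positivity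
  have h := AntitoneOn.integral_le_sum_Ico (Nat.add_le_add_right hab 1)
    (inv_antitoneOn_Icc_right ha')
  rw [integral_inv_of_pos ha' (by positivity), ← sum_Ico_add' (fun i : ℕ => (i : ℝ)⁻¹)] at h
  exact_mod_cast h

lemma one_add_log_le {n : ℕ} (hn : 2 ≤ n) : 1 + log n ≤ (1 + (log 2)⁻¹) * log n := by
  have h2 : 0 < log 2 := log_pos one_lt_two
  have h2n : log 2 ≤ log n := log_le_log two_pos (by exact_mod_cast hn)
  have : 1 ≤ (log 2)⁻¹ * log n := by rw [← div_eq_inv_mul, one_le_div h2]; exact h2n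
  linarith

lemma sqrt_add_one_sq_le {n : ℕ} (hn : 2 ≤ n) : (Nat.sqrt n + 1) ^ 2 ≤ 2 * n + 1 := by
  nlinarith [Nat.sqrt_le' n, Nat.sqrt_le_self n]

lemma log_le_four_mul_log_add_one_div {n m : ℝ} (hn : 0 < n) (hm : 0 < m)
    (hmn : m ^ 2 ≤ 2 * n + 1) :
    log n ≤ 4 * log ((n + 1) / m) := by
  have hm4 : n * m ^ 4 ≤ (n + 1) ^ 4 :=
    calc n * m ^ 4 = n * (m ^ 2) ^ 2 := by ring
      _ ≤ n * (2 * n + 1) ^ 2 := by gcongr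
      _ ≤ (n + 1) ^ 4 := by nlinarith [sq_nonneg n]
  calc log n ≤ log (((n + 1) / m) ^ 4) :=
        log_le_log hn (by rwa [div_pow, le_div_iff₀ (by positivity)])
    _ = 4 * log ((n + 1) / m) := by rw [log_pow]; norm_num

lemma exists_forall_le_mul_of_eventually {f g : ℕ → ℝ} {c : ℝ} (hg : ∀ m, 1 ≤ m → 0 < g m)
    (h : ∀ᶠ m in atTop, f m ≤ c * g m) : ∃ c', 0 < c' ∧ ∀ m, 1 ≤ m → f m ≤ c' * g m := by
  obtain ⟨M, hM⟩ := eventually_atTop.mp h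
  obtain ⟨B, hB⟩ := ((range M).image fun m => f m / g m).exists_le
  refine ⟨max (max c B) 1, lt_max_of_lt_right one_pos, fun m hm => ?_⟩
  have hgm := hg m hm
  rcases lt_or_ge m M with hmM | hmM
  · calc f m = f m / g m * g m := (div_mul_cancel₀ _ hgm.ne').symm
      _ ≤ B * g m := by gcongr; exact hB _ (mem_image_of_mem _ (mem_range.mpr hmM))
      _ ≤ max (max c B) 1 * g m := by
          gcongr; exact (le_max_right c B).trans (le_max_left _ _)
  · calc f m ≤ c * g m := hM m hmM
      _ ≤ max (max c B) 1 * g m := by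
          gcongr; exact (le_max_left c B).trans (le_max_left _ _)

lemma exists_pow_ge_log_le {m K : ℕ} (hm : 1 ≤ m) (hK : K ≠ 0) :
    ∃ a : ℕ, 1 ≤ a ∧ m ≤ a ^ K ∧ log a ≤ log 2 + log m / K := by
  set x : ℝ := (m : ℝ) ^ (K : ℝ)⁻¹
  have hx : 1 ≤ x := one_le_rpow (by exact_mod_cast hm) (by positivity)
  have hxa : x ≤ ⌈x⌉₊ := Nat.le_ceil x
  refine ⟨⌈x⌉₊, by exact_mod_cast hx.trans hxa, ?_, ?_⟩
  · have : (m : ℝ) ≤ (⌈x⌉₊ : ℝ) ^ K := by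
      calc (m : ℝ) = x ^ K := (rpow_inv_natCast_pow m.cast_nonneg hK).symm
        _ ≤ _ := by gcongr
    exact_mod_cast this
  · calc log ⌈x⌉₊ ≤ log (2 * x) :=
          log_le_log (by positivity) (by linarith [Nat.ceil_lt_add_one (zero_le_one.trans hx)])
      _ = log 2 + log m / K := by
          rw [log_mul two_ne_zero (by positivity), log_rpow (by positivity)]; ring

section LogStep

variable {f : ℕ → ℝ} {δ C : ℝ} (hδ : 0 < δ) (hC : 0 ≤ C)
  (hstep : ∀ n a : ℕ, 2 ≤ n → 1 ≤ a → log a ≤ δ * log n → f (n * a) ≤ C * f n)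
include hδ hC hstep

lemma le_pow_mul_of_log_step {m a : ℕ} (hm : 2 ≤ m) (ha : 1 ≤ a) (hlog : log a ≤ δ * log m) :
    ∀ i, f (m * a ^ i) ≤ C ^ i * f m
  | 0 => by simp
  | i + 1 => by
    have hmai : 2 ≤ m * a ^ i := hm.trans (Nat.le_mul_of_pos_right m (pow_pos ha i))
    have hlog' : log a ≤ δ * log (m * a ^ i : ℕ) :=
      hlog.trans (by gcongr; exact_mod_cast Nat.le_mul_of_pos_right m (pow_pos ha i))
    calc f (m * a ^ (i + 1)) = f (m * a ^ i * a) := by rw [pow_succ, mul_assoc]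
      _ ≤ C * f (m * a ^ i) := hstep _ a hmai ha hlog'
      _ ≤ C * (C ^ i * f m) := by gcongr; exact le_pow_mul_of_log_step hm ha hlog i
      _ = C ^ (i + 1) * f m := by ring

lemma exists_sq_le_mul_of_log_step (hf : Monotone f) (hpos : ∀ n, 1 ≤ n → 0 < f n) :
    ∃ c, 0 < c ∧ ∀ m, 1 ≤ m → f (m ^ 2) ≤ c * f m := by
  set K := ⌈2 / δ⌉₊
  have hK : 2 / δ ≤ K := Nat.le_ceil _
  have hK0 : K ≠ 0 := by positivity
  have hlarge : ∀ᶠ m : ℕ in atTop, f (m ^ 2) ≤ C ^ K * f m := by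
    filter_upwards [eventually_ge_atTop 2,
      (tendsto_log_atTop.comp tendsto_natCast_atTop_atTop).eventually_ge_atTop (2 * log 2 / δ)]
      with m hm hlogm
    obtain ⟨a, ha, hma, hloga⟩ := exists_pow_ge_log_le (one_le_two.trans hm) hK0
    have hlogm' : 2 * log 2 ≤ δ * log m := by rwa [div_le_iff₀' hδ] at hlogm
    have hlogK : log m / K ≤ δ / 2 * log m := by
      rw [div_le_iff₀ (by positivity)]
      rw [div_le_iff₀ hδ] at hK
      nlinarith [log_nonneg (show (1 : ℝ) ≤ m by exact_mod_cast one_le_two.trans hm)]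
    calc f (m ^ 2) ≤ f (m * a ^ K) := hf (by rw [sq]; exact Nat.mul_le_mul_left m hma)
      _ ≤ C ^ K * f m := le_pow_mul_of_log_step hδ hC hstep hm ha (by linarith) K
  exact exists_forall_le_mul_of_eventually hpos hlarge

end LogStep

noncomputable def cumSum (ξ : ℕ → ℝ) (n : ℕ) : ℝ := ∑ j ∈ Icc 1 n, ξ j

lemma cumSum_eq_sum_range (ξ : ℕ → ℝ) (n : ℕ) : cumSum ξ n = ∑ i ∈ range n, ξ (i + 1) := by
  rw [range_eq_Ico, sum_Ico_add' ξ, zero_add, Ico_add_one_right_eq_Icc, cumSum]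

lemma cumSum_sub_cumSum (ξ : ℕ → ℝ) {a b : ℕ} (hab : a ≤ b) :
    cumSum ξ b - cumSum ξ a = ∑ i ∈ Ico a b, ξ (i + 1) := by
  rw [cumSum_eq_sum_range, cumSum_eq_sum_range, sum_Ico_eq_sub _ hab]

lemma am2_div_am (ξ : ℕ → ℝ) {n : ℕ} (hn : n ≠ 0) :
    am2 ξ n / am ξ n = cumSum (am ξ) n / cumSum ξ n :=
  div_div_div_cancel_right₀ (Nat.cast_ne_zero.mpr hn) _ _

section Nonneg

variable {ξ : ℕ → ℝ} (hξ : ∀ n, 1 ≤ n → 0 ≤ ξ n)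
include hξ

lemma cumSum_nonneg (n : ℕ) : 0 ≤ cumSum ξ n :=
  sum_nonneg fun i hi => hξ i (mem_Icc.mp hi).1

lemma am_nonneg (n : ℕ) : 0 ≤ am ξ n :=
  div_nonneg (cumSum_nonneg hξ n) n.cast_nonneg

lemma cumSum_mono : Monotone (cumSum ξ) := fun _ _ h =>
  sum_le_sum_of_subset_of_nonneg (Icc_subset_Icc_right h) fun i hi _ => hξ i (mem_Icc.mp hi).1

lemma cumSum_pos (h1 : 0 < ξ 1) {n : ℕ} (hn : 1 ≤ n) : 0 < cumSum ξ n :=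
  h1.trans_le <| by simpa [cumSum] using cumSum_mono hξ hn

lemma cumSum_am_sub_le {a b : ℕ} (ha : 1 ≤ a) (hab : a ≤ b) :
    cumSum (am ξ) b - cumSum (am ξ) a ≤ cumSum ξ b * log (b / a) :=
  calc cumSum (am ξ) b - cumSum (am ξ) a
        = ∑ i ∈ Ico a b, cumSum ξ (i + 1) * ((i + 1 : ℕ) : ℝ)⁻¹ := cumSum_sub_cumSum _ hab
    _ ≤ ∑ i ∈ Ico a b, cumSum ξ b * ((i + 1 : ℕ) : ℝ)⁻¹ :=
        sum_le_sum fun i hi => by gcongr; exact cumSum_mono hξ (mem_Ico.mp hi).2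
    _ ≤ cumSum ξ b * log (b / a) := by
        rw [← mul_sum]; gcongr
        · exact cumSum_nonneg hξ b
        · exact sum_inv_succ_le_log_div ha hab

lemma le_cumSum_am {a b : ℕ} (hab : a ≤ b) :
    cumSum ξ (a + 1) * log ((b + 1) / (a + 1)) ≤ cumSum (am ξ) b :=
  calc cumSum ξ (a + 1) * log ((b + 1) / (a + 1))
      ≤ ∑ i ∈ Ico a b, cumSum ξ (a + 1) * ((i + 1 : ℕ) : ℝ)⁻¹ := by
        rw [← mul_sum]; gcongr
        · exact cumSum_nonneg hξ _
        · exact log_div_le_sum_inv_succ hab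
    _ ≤ ∑ i ∈ Ico a b, cumSum ξ (i + 1) * ((i + 1 : ℕ) : ℝ)⁻¹ :=
        sum_le_sum fun i hi => by
          gcongr; exact cumSum_mono hξ (by simpa using (mem_Ico.mp hi).1)
    _ = cumSum (am ξ) b - cumSum (am ξ) a := (cumSum_sub_cumSum (am ξ) hab).symm
    _ ≤ cumSum (am ξ) b := sub_le_self _ (cumSum_nonneg (fun i _ => am_nonneg hξ i) a)

lemma cumSum_am_le {n : ℕ} (hn : 2 ≤ n) :
    cumSum (am ξ) n ≤ (1 + (log 2)⁻¹) * log n * cumSum ξ n := by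
  have hsub := cumSum_am_sub_le hξ le_rfl (one_le_two.trans hn)
  have h1 : cumSum (am ξ) 1 ≤ cumSum ξ n := by
    simpa [cumSum, am] using cumSum_mono hξ (one_le_two.trans hn)
  calc cumSum (am ξ) n ≤ (1 + log n) * cumSum ξ n := by
        rw [Nat.cast_one, div_one] at hsub; linarith
    _ ≤ (1 + (log 2)⁻¹) * log n * cumSum ξ n := by
        gcongr
        · exact cumSum_nonneg hξ n
        · exact one_add_log_le hn

lemma mul_log_le_cumSum_am_of_sq_le {c : ℝ} (hc : 0 < c)
    (hΔ : ∀ m, 1 ≤ m → cumSum ξ (m ^ 2) ≤ c * cumSum ξ m) {n : ℕ} (hn : 2 ≤ n) :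
    (4 * c)⁻¹ * log n * cumSum ξ n ≤ cumSum (am ξ) n := by
  set k := Nat.sqrt n
  have hS : cumSum ξ n ≤ c * cumSum ξ (k + 1) :=
    (cumSum_mono hξ (by rw [sq]; exact (Nat.lt_succ_sqrt n).le)).trans (hΔ (k + 1) k.succ_pos)
  have hlog : log n ≤ 4 * log ((n + 1) / (k + 1)) :=
    log_le_four_mul_log_add_one_div (by positivity) (by positivity)
      (by exact_mod_cast sqrt_add_one_sq_le hn)
  have hS0 : 0 ≤ cumSum ξ n := cumSum_nonneg hξ n
  have hlog0 : 0 ≤ (4 * c)⁻¹ * (4 * log ((n + 1) / (k + 1))) :=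
    mul_nonneg (by positivity) (hlog.trans' (log_nonneg (by exact_mod_cast one_le_two.trans hn)))
  calc (4 * c)⁻¹ * log n * cumSum ξ n
      ≤ (4 * c)⁻¹ * (4 * log ((n + 1) / (k + 1))) * (c * cumSum ξ (k + 1)) := by
        gcongr
    _ = cumSum ξ (k + 1) * log ((n + 1) / (k + 1)) := by field_simp
    _ ≤ cumSum (am ξ) n := by exact_mod_cast le_cumSum_am hξ (Nat.sqrt_le_self n)

lemma cumSum_mul_le_of_log_le {α : ℝ} (hα : 0 < α)
    (hbd : ∀ n : ℕ, 2 ≤ n → α * log n * cumSum ξ n ≤ cumSum (am ξ) n)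
    {n a : ℕ} (hn : 2 ≤ n) (ha : 1 ≤ a) (hlog : log a ≤ α / 2 * log n) :
    cumSum ξ (n * a) ≤ (2 / α * (1 + (log 2)⁻¹)) * cumSum ξ n := by
  set N := n * a
  have hnN : n ≤ N := Nat.le_mul_of_pos_right n ha
  have hlogN : log N = log n + log a := by
    simp only [N, Nat.cast_mul]; exact log_mul (by positivity) (by positivity)
  have hsub := cumSum_am_sub_le hξ (one_le_two.trans hn) hnN
  rw [show (N : ℝ) / n = a by simp only [N, Nat.cast_mul]; field_simp] at hsub
  have hloga : 0 ≤ log a := log_nonneg (by exact_mod_cast ha)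
  have hlogn : 0 < log n := log_pos (by exact_mod_cast hn)
  have hSN := cumSum_nonneg hξ N
  have key : α / 2 * log n * cumSum ξ N ≤ (1 + (log 2)⁻¹) * log n * cumSum ξ n :=
    calc α / 2 * log n * cumSum ξ N ≤ (α * log N - log a) * cumSum ξ N := by
          gcongr; nlinarith
      _ ≤ cumSum (am ξ) n := by nlinarith [hbd N (hn.trans hnN)]
      _ ≤ (1 + (log 2)⁻¹) * log n * cumSum ξ n := cumSum_am_le hξ hn
  refine le_of_mul_le_mul_left (key.trans_eq ?_) (show 0 < α / 2 * log n by positivity)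
  field_simp

end Nonneg

theorem stmt_15_general (η : ℕ → ℝ)
    (hnonneg : ∀ n : ℕ, 1 ≤ n → 0 ≤ η n)
    (h1 : 0 < η 1) :
    (∃ α β : ℝ, 0 < α ∧ 0 < β ∧ ∀ n : ℕ, 2 ≤ n →
        α * Real.log n ≤ am2 η n / am η n ∧ am2 η n / am η n ≤ β * Real.log n) ↔
    (∃ c : ℝ, 0 < c ∧ ∀ m : ℕ, 1 ≤ m →
        ∑ i ∈ Finset.Icc 1 (m ^ 2), η i ≤ c * ∑ i ∈ Finset.Icc 1 m, η i) := by
  have hS : ∀ n : ℕ, 2 ≤ n → 0 < cumSum η n := fun n hn => cumSum_pos hnonneg h1 (by omega)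
  have hratio : ∀ n : ℕ, 2 ≤ n → am2 η n / am η n = cumSum (am η) n / cumSum η n :=
    fun n hn => am2_div_am η (by omega)
  constructor
  · rintro ⟨α, _, hα, -, hbd⟩
    refine exists_sq_le_mul_of_log_step (half_pos hα) (by positivity)
      (fun n a hn ha hlog => cumSum_mul_le_of_log_le hnonneg hα (fun n hn => ?_) hn ha hlog)
      (cumSum_mono hnonneg) (fun n hn => cumSum_pos hnonneg h1 hn)
    rw [← le_div_iff₀ (hS n hn), ← hratio n hn]
    exact (hbd n hn).1
  · rintro ⟨c, hc, hΔ⟩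
    refine ⟨(4 * c)⁻¹, 1 + (log 2)⁻¹, by positivity, by positivity, fun n hn => ?_⟩
    rw [hratio n hn, le_div_iff₀ (hS n hn), div_le_iff₀ (hS n hn)]
    exact ⟨mul_log_le_cumSum_am_of_sq_le hnonneg hc hΔ hn, cumSum_am_le hnonneg hn⟩

theorem stmt_15 (η : ℕ → ℝ)
    (hmono : ∀ n : ℕ, 1 ≤ n → η (n + 1) ≤ η n)
    (hnonneg : ∀ n : ℕ, 1 ≤ n → 0 ≤ η n)
    (h1 : 0 < η 1)
    (hlim : Tendsto η atTop (nhds 0)) :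
    (∃ α β : ℝ, 0 < α ∧ 0 < β ∧ ∀ n : ℕ, 2 ≤ n →
        α * Real.log n ≤ am2 η n / am η n ∧ am2 η n / am η n ≤ β * Real.log n) ↔
    (∃ c : ℝ, 0 < c ∧ ∀ m : ℕ, 1 ≤ m →
        ∑ i ∈ Finset.Icc 1 (m ^ 2), η i ≤ c * ∑ i ∈ Finset.Icc 1 m, η i) :=
  stmt_15_general η hnonneg h1
end

section
/- Let 0 ≠ η ∈ c₀* and suppose r(η_a) = η_{a²}/η_a is equivalent to a monotone sequence (there is a nondecreasing positive sequence φ and β > 0 with φ_n ≤ r(η_a)_n ≤ β·φ_n for all n). Then there exist constants K, M > 0 such that for every m ≥ M there exists n > m with (η_{a²})_n ≤ K·(m/n)·log(n/m)·(η_a)_m. -/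
open Finset Filter Real

/-! Write `A = η_a`, `A₂ = η_{a²}` and `H` for the harmonic numbers. Since `A` is the mean of `η`,
`n A₂_n - m A₂_m = ∑_{m<j≤n} A_j ≤ n A_n (H_n - H_m)`. Choose `n > m` with `H_n - H_m` between
`φ_m / 4` and `φ_m / 2 ≤ φ_n / 2` (possible for large `m`, as `H` diverges in steps `≤ 1/m`).
The lower ratio bound `φ_n A_n ≤ A₂_n` lets the left side absorb the error term, so
`n A₂_n ≤ 2 m A₂_m ≤ 2 β φ_m m A_m ≤ 8 β (H_n - H_m) m A_m`, and `H_n - H_m ≤ log (n/m)`. -/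

lemma natCast_mul_am (ξ : ℕ → ℝ) (n : ℕ) : (n : ℝ) * am ξ n = ∑ j ∈ Icc 1 n, ξ j := by
  rcases eq_or_ne n 0 with rfl | hn
  · simp
  · exact mul_div_cancel₀ _ (Nat.cast_ne_zero.2 hn)

lemma am_pos {ξ : ℕ → ℝ} (hξ : ∀ j, 1 ≤ j → 0 < ξ j) {n : ℕ} (hn : 1 ≤ n) : 0 < am ξ n :=
  div_pos (sum_pos (fun j hj => hξ j (mem_Icc.1 hj).1) ⟨1, mem_Icc.2 ⟨le_rfl, hn⟩⟩)
    (Nat.cast_pos.2 hn)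

lemma am_le_of_le {ξ : ℕ → ℝ} (hξ : ∀ j, 1 ≤ j → 0 ≤ ξ j) {j n : ℕ} (hjn : j ≤ n) :
    am ξ j ≤ n * am ξ n / j := by
  rw [am, natCast_mul_am]
  gcongr
  exact fun i hi _ => hξ i (mem_Icc.1 hi).1

lemma sum_Icc_one_eq_add_sum_Ioc (f : ℕ → ℝ) {m n : ℕ} (hmn : m ≤ n) :
    ∑ j ∈ Icc 1 n, f j = ∑ j ∈ Icc 1 m, f j + ∑ j ∈ Ioc m n, f j := by
  have hIcc (k : ℕ) : Icc 1 k = Ioc 0 k := Icc_add_one_left_eq_Ioc 0 k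
  rw [hIcc, hIcc]
  exact (sum_Ioc_consecutive f (Nat.zero_le m) hmn).symm

lemma harmonic_sub_harmonic_eq_sum_Ioc (m n : ℕ) (hmn : m ≤ n) :
    (harmonic n : ℝ) - harmonic m = ∑ j ∈ Ioc m n, (j : ℝ)⁻¹ := by
  simp only [harmonic_eq_sum_Icc, Rat.cast_sum, Rat.cast_inv, Rat.cast_natCast]
  rw [sum_Icc_one_eq_add_sum_Ioc _ hmn]
  ring

lemma harmonic_sub_harmonic_le_log_div {m n : ℕ} (hm : 1 ≤ m) (hmn : m ≤ n) :
    (harmonic n : ℝ) - harmonic m ≤ log (n / m) := by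
  have h := strictAnti_eulerMascheroniSeq'.antitone hmn
  simp only [eulerMascheroniSeq', if_neg (by omega : m ≠ 0), if_neg (by omega : n ≠ 0)] at h
  rw [log_div (by norm_cast; omega) (by norm_cast; omega)]
  linarith

lemma tendsto_harmonic_atTop : Tendsto (fun n => (harmonic n : ℝ)) atTop atTop :=
  tendsto_atTop_mono log_add_one_le_harmonic <|
    tendsto_log_atTop.comp <| tendsto_natCast_atTop_atTop.comp <| tendsto_add_atTop_nat 1

lemma natCast_mul_am2_le {ξ : ℕ → ℝ} (hξ : ∀ j, 1 ≤ j → 0 ≤ ξ j) {m n : ℕ} (hmn : m ≤ n) :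
    n * am2 ξ n ≤ m * am2 ξ m + n * am ξ n * (harmonic n - harmonic m : ℝ) := by
  rw [am2, natCast_mul_am, natCast_mul_am, harmonic_sub_harmonic_eq_sum_Ioc m n hmn, mul_sum,
    sum_Icc_one_eq_add_sum_Ioc _ hmn]
  gcongr with j hj
  exact am_le_of_le hξ (mem_Ioc.1 hj).2

lemma exists_gt_mem_Icc_of_tendsto_atTop {u : ℕ → ℝ} (hu : Tendsto u atTop atTop) {m : ℕ}
    {a δ : ℝ} (ha : u m < a) (hstep : ∀ k, m ≤ k → u (k + 1) ≤ u k + δ) :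
    ∃ n, m < n ∧ u n ∈ Set.Icc a (a + δ) := by
  classical
  have hex : ∃ n, m < n ∧ a ≤ u n :=
    ((eventually_gt_atTop m).and (hu.eventually_ge_atTop a)).exists
  obtain ⟨hmn, han⟩ := Nat.find_spec hex
  obtain ⟨k, hk⟩ : ∃ k, Nat.find hex = k + 1 := Nat.exists_eq_add_one.2 (by omega)
  have hka : u k < a := by
    rcases (show m ≤ k by omega).eq_or_lt with rfl | hmk
    · exact ha
    · exact lt_of_not_ge fun h => Nat.find_min hex (by omega) ⟨hmk, h⟩
  refine ⟨Nat.find hex, hmn, han, ?_⟩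
  rw [hk]
  linarith [hstep k (by omega)]

lemma am2_le_of_harmonic_gap {ξ : ℕ → ℝ} (hξ : ∀ j, 1 ≤ j → 0 < ξ j) {m n : ℕ} (hm : 1 ≤ m)
    (hmn : m ≤ n) {φm φn β : ℝ} (hβ : 0 ≤ β) (hratio_n : φn ≤ am2 ξ n / am ξ n)
    (hratio_m : am2 ξ m / am ξ m ≤ β * φm) (hgap_ge : φm / 4 ≤ (harmonic n - harmonic m : ℝ))
    (hgap_le : (harmonic n - harmonic m : ℝ) ≤ φn / 2) :
    am2 ξ n ≤ 8 * β * (m / n) * (harmonic n - harmonic m : ℝ) * am ξ m := by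
  have hgrowth := natCast_mul_am2_le (fun j hj => (hξ j hj).le) hmn
  set D : ℝ := harmonic n - harmonic m
  have hAm := am_pos hξ hm
  have hAn := am_pos hξ (hm.trans hmn)
  have hn : (0 : ℝ) < n := by norm_cast; omega
  have habsorb : n * am ξ n * D ≤ n * am2 ξ n / 2 :=
    calc n * am ξ n * D ≤ n * am ξ n * (φn / 2) := by gcongr
      _ = n * (φn * am ξ n) / 2 := by ring
      _ ≤ n * am2 ξ n / 2 := by gcongr; exact (le_div_iff₀ hAn).1 hratio_n
  have hA2m : am2 ξ m ≤ β * (4 * D) * am ξ m :=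
    calc am2 ξ m ≤ β * φm * am ξ m := (div_le_iff₀ hAm).1 hratio_m
      _ ≤ β * (4 * D) * am ξ m := by gcongr; linarith
  have hm_A2m := mul_le_mul_of_nonneg_left hA2m (Nat.cast_nonneg m)
  calc am2 ξ n = n * am2 ξ n / n := by field_simp
    _ ≤ 8 * β * D * (m * am ξ m) / n := div_le_div_of_nonneg_right (by linarith) hn.le
    _ = 8 * β * (m / n) * D * am ξ m := by ring

theorem stmt_17_general (η φ : ℕ → ℝ)
    (hpos : ∀ n : ℕ, 1 ≤ n → 0 < η n)
    (hφmono : ∀ n : ℕ, 1 ≤ n → φ n ≤ φ (n + 1))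
    (hφpos : ∀ n : ℕ, 1 ≤ n → 0 < φ n)
    (β : ℝ) (hβ : 0 < β)
    (hequiv : ∀ n : ℕ, 1 ≤ n → φ n ≤ am2 η n / am η n ∧ am2 η n / am η n ≤ β * φ n) :
    ∃ (K : ℝ) (M : ℕ), 0 < K ∧ 0 < M ∧ ∀ m : ℕ, M ≤ m →
      ∃ n : ℕ, m < n ∧
        am2 η n ≤ K * ((m : ℝ) / n) * Real.log ((n : ℝ) / m) * am η m := by
  have hφ : MonotoneOn φ {k | 1 ≤ k} := monotoneOn_nat_Ici_of_le_succ hφmono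
  have hφ1 := hφpos 1 le_rfl
  obtain ⟨M, hM⟩ := exists_nat_gt (4 / φ 1)
  have hM0 : 0 < M := by exact_mod_cast (div_pos four_pos hφ1).trans hM
  refine ⟨8 * β, M, by positivity, hM0, fun m hm => ?_⟩
  have hm1 : 1 ≤ m := hM0.trans_le hm
  have hφm : φ 1 ≤ φ m := hφ (show 1 ≤ 1 from le_rfl) hm1 hm1
  have hinv : (m : ℝ)⁻¹ ≤ φ m / 4 := by
    have : 4 < (m : ℝ) * φ m :=
      calc 4 = 4 / φ 1 * φ 1 := by field_simp
        _ < M * φ 1 := by gcongr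
        _ ≤ m * φ m := by gcongr
    rw [inv_eq_one_div, div_le_div_iff₀ (by positivity) four_pos]
    linarith
  obtain ⟨n, hmn, hHn_ge, hHn_le⟩ := exists_gt_mem_Icc_of_tendsto_atTop tendsto_harmonic_atTop
    (m := m) (a := harmonic m + φ m / 4) (δ := φ m / 4) (by linarith [hφpos m hm1]) fun k hk => by
      have hk' : ((k + 1 : ℕ) : ℝ)⁻¹ ≤ (m : ℝ)⁻¹ := by gcongr; omega
      rw [harmonic_succ, Rat.cast_add, Rat.cast_inv, Rat.cast_natCast]
      linarith
  have hφn : φ m ≤ φ n := hφ hm1 (hm1.trans hmn.le) hmn.le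
  refine ⟨n, hmn, ?_⟩
  calc am2 η n ≤ 8 * β * (m / n) * (harmonic n - harmonic m : ℝ) * am η m :=
        am2_le_of_harmonic_gap hpos hm1 hmn.le hβ.le (hequiv n (hm1.trans hmn.le)).1
          (hequiv m hm1).2 (by linarith) (by linarith)
    _ ≤ 8 * β * (m / n) * log (n / m) * am η m := by
        gcongr
        · exact (am_pos hpos hm1).le
        · exact harmonic_sub_harmonic_le_log_div hm1 hmn.le

theorem stmt_17 (η φ : ℕ → ℝ)
    (hmono : ∀ n : ℕ, 1 ≤ n → η (n + 1) ≤ η n)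
    (hpos : ∀ n : ℕ, 1 ≤ n → 0 < η n)
    (hlim : Tendsto η atTop (nhds 0))
    (hφmono : ∀ n : ℕ, 1 ≤ n → φ n ≤ φ (n + 1))
    (hφpos : ∀ n : ℕ, 1 ≤ n → 0 < φ n)
    (β : ℝ) (hβ : 0 < β)
    (hequiv : ∀ n : ℕ, 1 ≤ n → φ n ≤ am2 η n / am η n ∧ am2 η n / am η n ≤ β * φ n) :
    ∃ (K : ℝ) (M : ℕ), 0 < K ∧ 0 < M ∧ ∀ m : ℕ, M ≤ m →
      ∃ n : ℕ, m < n ∧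
        am2 η n ≤ K * ((m : ℝ) / n) * Real.log ((n : ℝ) / m) * am η m :=
  stmt_17_general η φ hpos hφmono hφpos β hβ hequiv
end
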